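/- Let d ≥ 1, s > 1, δ ∈ (0,1), and let σ satisfy 0 < σ ≤ (1−δ)/s. Let 0 < τ' < τ. Define W(ξ,η) = exp( τ'⟨ξ⟩^σ − τ⟨η⟩^σ − τ⟨ξ⟩^{−δ/s}⟨ξ−η⟩^{1/s} ) for ξ, η ∈ ℝ^d. Then sup_{ξ ∈ ℝ^d} ∫_{ℝ^d} W(ξ,η)² dη < ∞. -/
import Mathlib


open MeasureTheory Real
open scoped FourierTransform ENNReal

noncomputable section

/-- `ℝ^d` as a Euclidean space. -/
abbrev E (d : ℕ) := EuclideanSpace ℝ (Fin d)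

/-- The Japanese bracket `⟨ξ⟩ = (1 + |ξ|²)^{1/2}`. -/
def jap {d : ℕ} (ξ : E d) : ℝ := Real.sqrt (1 + ‖ξ‖ ^ 2)

lemma one_le_jap {d : ℕ} (ξ : E d) : 1 ≤ jap ξ := by
  rw [jap, Real.one_le_sqrt]
  nlinarith [sq_nonneg ‖ξ‖]

lemma jap_triangle {d : ℕ} (ξ η : E d) : jap ξ ≤ jap η + jap (ξ - η) := by
  set a := ‖η‖ with ha
  set b := ‖ξ - η‖ with hb
  have ha0 : 0 ≤ a := norm_nonneg _
  have hb0 : 0 ≤ b := norm_nonneg _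
  have hξ : ‖ξ‖ ≤ a + b := by
    calc ‖ξ‖ = ‖η + (ξ - η)‖ := by congr 1; abel
    _ ≤ a + b := norm_add_le _ _
  have h1 : jap ξ ≤ Real.sqrt (1 + (a + b) ^ 2) := by
    apply Real.sqrt_le_sqrt
    nlinarith [norm_nonneg ξ]
  refine h1.trans ?_
  have hsa := Real.sq_sqrt (by positivity : (0:ℝ) ≤ 1 + a ^ 2)
  have hsb := Real.sq_sqrt (by positivity : (0:ℝ) ≤ 1 + b ^ 2)
  have hsa0 := Real.sqrt_nonneg (1 + a ^ 2)
  have hsb0 := Real.sqrt_nonneg (1 + b ^ 2)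
  have haa : a ≤ Real.sqrt (1 + a ^ 2) := by
    have := Real.sqrt_le_sqrt (by linarith : a ^ 2 ≤ 1 + a ^ 2)
    rwa [Real.sqrt_sq ha0] at this
  have hbb : b ≤ Real.sqrt (1 + b ^ 2) := by
    have := Real.sqrt_le_sqrt (by linarith : b ^ 2 ≤ 1 + b ^ 2)
    rwa [Real.sqrt_sq hb0] at this
  have h2 : 1 + (a + b) ^ 2 ≤ (Real.sqrt (1 + a ^ 2) + Real.sqrt (1 + b ^ 2)) ^ 2 := by
    nlinarith [mul_le_mul haa hbb hb0 hsa0]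
  have := Real.sqrt_le_sqrt h2
  rwa [Real.sqrt_sq (by positivity)] at this

/-- The key pointwise estimate, abstractly for real numbers. -/
lemma key_est {s δ σ τ' τ A B x : ℝ} (hs : 1 < s) (hδ0 : 0 < δ) (hδ1 : δ < 1)
    (hσ0 : 0 < σ) (hσ : σ ≤ (1 - δ) / s) (hτ'0 : 0 < τ') (hτ'τ : τ' < τ)
    (hA : 1 ≤ A) (hB : 1 ≤ B) (hx : 1 ≤ x) (htri : B ≤ x + A) :
    τ' * B ^ σ - τ * x ^ σ - τ * B ^ (-(δ / s)) * A ^ (1 / s)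
      ≤ -((τ - τ') / 2) * x ^ σ := by
  have hs0 : (0:ℝ) < s := by linarith
  have hA0 : (0:ℝ) < A := by linarith
  have hB0 : (0:ℝ) < B := by linarith
  have hσs : σ * s ≤ 1 - δ := by
    rw [div_eq_mul_inv] at hσ
    calc σ * s ≤ ((1 - δ) * s⁻¹) * s := by
          exact mul_le_mul_of_nonneg_right hσ hs0.le
    _ = 1 - δ := by field_simp
  have hσ1 : σ ≤ 1 := by nlinarith
  have hτ0 : (0:ℝ) < τ := by linarith
  have hBσ0 : (0:ℝ) ≤ B ^ σ := Real.rpow_nonneg hB0.le σ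
  have hxσ0 : (0:ℝ) ≤ x ^ σ := Real.rpow_nonneg (by linarith) σ
  have hes : -(δ / s) ≤ 0 := by
    rw [neg_nonpos]
    positivity
  rcases le_total B A with hAB | hAB
  · -- Case B ≤ A
    have h1 : A ^ (-(δ / s)) ≤ B ^ (-(δ / s)) :=
      Real.rpow_le_rpow_of_nonpos hB0 hAB hes
    have h2 : A ^ (-(δ / s)) * A ^ (1 / s) = A ^ ((1 - δ) / s) := by
      rw [← Real.rpow_add hA0]
      congr 1
      ring
    have h3 : A ^ σ ≤ A ^ ((1 - δ) / s) :=
      Real.rpow_le_rpow_of_exponent_le hA hσ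
    have h4 : B ^ σ ≤ A ^ σ := Real.rpow_le_rpow hB0.le hAB hσ0.le
    have h5 : B ^ σ ≤ B ^ (-(δ / s)) * A ^ (1 / s) := by
      calc B ^ σ ≤ A ^ ((1 - δ) / s) := h4.trans h3
      _ = A ^ (-(δ / s)) * A ^ (1 / s) := h2.symm
      _ ≤ B ^ (-(δ / s)) * A ^ (1 / s) :=
          mul_le_mul_of_nonneg_right h1 (Real.rpow_nonneg hA0.le _)
    nlinarith [mul_le_mul_of_nonneg_left h5 hτ0.le]
  · -- Case A ≤ B
    have he1 : 1 / s - 1 ≤ 0 := by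
      rw [sub_nonpos, div_le_one hs0]; linarith
    have h1 : B ^ (1 / s - 1) ≤ A ^ (1 / s - 1) :=
      Real.rpow_le_rpow_of_nonpos hA0 hAB he1
    have h2 : A * A ^ (1 / s - 1) = A ^ (1 / s) := by
      nth_rewrite 1 [← Real.rpow_one A]
      rw [← Real.rpow_add hA0]
      congr 1
      ring
    have h3 : A * B ^ (1 / s - 1) ≤ A ^ (1 / s) := by
      rw [← h2]
      exact mul_le_mul_of_nonneg_left h1 hA0.le
    have h4 : B ^ (-(δ / s)) * B ^ (1 / s - 1) = B ^ ((1 - δ) / s - 1) := by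
      rw [← Real.rpow_add hB0]
      congr 1
      ring
    have h5 : B ^ (σ - 1) ≤ B ^ ((1 - δ) / s - 1) :=
      Real.rpow_le_rpow_of_exponent_le hB (by linarith)
    have hP0 : (0:ℝ) ≤ A * B ^ (σ - 1) := by positivity
    have hT : A * B ^ (σ - 1) ≤ B ^ (-(δ / s)) * A ^ (1 / s) := by
      calc A * B ^ (σ - 1) ≤ A * B ^ ((1 - δ) / s - 1) :=
            mul_le_mul_of_nonneg_left h5 hA0.le
      _ = B ^ (-(δ / s)) * (A * B ^ (1 / s - 1)) := by
          rw [show B ^ (-(δ / s)) * (A * B ^ (1 / s - 1))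
              = A * (B ^ (-(δ / s)) * B ^ (1 / s - 1)) from by ring, h4]
      _ ≤ B ^ (-(δ / s)) * A ^ (1 / s) :=
          mul_le_mul_of_nonneg_left h3 (Real.rpow_nonneg hB0.le _)
    have h6 : B ^ σ - A * B ^ (σ - 1) ≤ (B - A) ^ σ := by
      rcases eq_or_lt_of_le hAB with rfl | hlt
      · have hAA : A * A ^ (σ - 1) = A ^ σ := by
          nth_rewrite 1 [← Real.rpow_one A]
          rw [← Real.rpow_add hA0]
          congr 1
          ring
        rw [sub_self, Real.zero_rpow hσ0.ne']
        linarith [hAA.le]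
      · have hu0 : (0:ℝ) < (B - A) / B := div_pos (by linarith) hB0
        have hu1 : (B - A) / B ≤ 1 := by
          rw [div_le_one hB0]; linarith
        have hu : ((B - A) / B) ^ (1:ℝ) ≤ ((B - A) / B) ^ σ :=
          Real.rpow_le_rpow_of_exponent_ge hu0 hu1 hσ1
        rw [Real.rpow_one] at hu
        have hmul : ((B - A) / B) ^ σ * B ^ σ = (B - A) ^ σ := by
          rw [← Real.mul_rpow hu0.le hB0.le, div_mul_cancel₀ _ hB0.ne']
        have hBs : B ^ (σ - 1) = B ^ σ / B := by
          rw [Real.rpow_sub hB0, Real.rpow_one]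
        have hge : (B - A) / B * B ^ σ ≤ (B - A) ^ σ := by
          rw [← hmul]
          exact mul_le_mul_of_nonneg_right hu hBσ0
        rw [hBs]
        have : B ^ σ - A * (B ^ σ / B) = (B - A) / B * B ^ σ := by
          field_simp
        linarith
    have hx5 : (B - A) ^ σ ≤ x ^ σ :=
      Real.rpow_le_rpow (by linarith) (by linarith) hσ0.le
    have hTT : τ * (A * B ^ (σ - 1)) ≤ τ * B ^ (-(δ / s)) * A ^ (1 / s) := by
      rw [mul_assoc]
      exact mul_le_mul_of_nonneg_left hT hτ0.le
    nlinarith [mul_nonneg (by linarith : (0:ℝ) ≤ (τ + τ') / 2)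
        (by linarith : (0:ℝ) ≤ x ^ σ - (B ^ σ - A * B ^ (σ - 1)))]

/-- Uniform-in-`ξ` square integrability in `η` of the exponential
weight `W(ξ,η) = exp(τ'⟨ξ⟩^σ − τ⟨η⟩^σ − τ⟨ξ⟩^{−δ/s}⟨ξ−η⟩^{1/s})`. -/
theorem stmt_11 (d : ℕ) (hd : 1 ≤ d) (s δ σ τ' τ : ℝ)
    (hs : 1 < s) (hδ0 : 0 < δ) (hδ1 : δ < 1)
    (hσ0 : 0 < σ) (hσ : σ ≤ (1 - δ) / s) (hτ'0 : 0 < τ') (hτ'τ : τ' < τ) :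
    (⨆ ξ : E d, ∫⁻ η : E d, ENNReal.ofReal
        ((Real.exp (τ' * jap ξ ^ σ - τ * jap η ^ σ
            - τ * jap ξ ^ (-(δ / s)) * jap (ξ - η) ^ (1 / s))) ^ 2)) < ⊤ := by
  set c : ℝ := τ - τ' with hc
  have hc0 : 0 < c := by simp [hc]; linarith
  -- Step 1: uniform pointwise bound of the integrand
  have hpt : ∀ ξ η : E d,
      ENNReal.ofReal ((Real.exp (τ' * jap ξ ^ σ - τ * jap η ^ σ
          - τ * jap ξ ^ (-(δ / s)) * jap (ξ - η) ^ (1 / s))) ^ 2)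
        ≤ ENNReal.ofReal (Real.exp (-c * jap η ^ σ)) := by
    intro ξ η
    have hkey := key_est hs hδ0 hδ1 hσ0 hσ hτ'0 hτ'τ
      (one_le_jap (ξ - η)) (one_le_jap ξ) (one_le_jap η) (jap_triangle ξ η)
    rw [sq, ← Real.exp_add]
    apply ENNReal.ofReal_le_ofReal
    apply Real.exp_le_exp.2
    have hxσ0 : (0:ℝ) ≤ jap η ^ σ := Real.rpow_nonneg (by linarith [one_le_jap η]) σ
    simp only [hc]
    nlinarith [hkey]
  -- Step 2: the dominating function has finite integral
  obtain ⟨n, hn⟩ := exists_nat_gt ((d : ℝ) / σ)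
  have hdn : (d : ℝ) < σ * n := by
    rw [div_lt_iff₀ hσ0] at hn
    linarith
  have hint : Integrable (fun η : E d => ((1:ℝ) + ‖η‖ ^ 2) ^ (-(σ * n) / 2)) :=
    integrable_rpow_neg_one_add_norm_sq (by rw [finrank_euclideanSpace_fin]; exact hdn)
  have hint2 : Integrable (fun η : E d =>
      ((n.factorial : ℝ) / c ^ n) * ((1:ℝ) + ‖η‖ ^ 2) ^ (-(σ * n) / 2)) := hint.const_mul _
  have hdom : ∀ η : E d, Real.exp (-c * jap η ^ σ)
      ≤ ((n.factorial : ℝ) / c ^ n) * ((1:ℝ) + ‖η‖ ^ 2) ^ (-(σ * n) / 2) := by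
    intro η
    set t : ℝ := jap η with ht
    have ht1 : 1 ≤ t := one_le_jap η
    have ht0 : (0:ℝ) < t := by linarith
    have htσ : (0:ℝ) < t ^ σ := Real.rpow_pos_of_pos ht0 σ
    have hX0 : (0:ℝ) ≤ 1 + ‖η‖ ^ 2 := by positivity
    have hfact := Real.pow_div_factorial_le_exp (c * t ^ σ) (by positivity) n
    have h1 : Real.exp (-(c * t ^ σ)) ≤ (n.factorial : ℝ) / (c * t ^ σ) ^ n := by
      rw [Real.exp_neg]
      have h := inv_anti₀ (by positivity : (0:ℝ) < (c * t ^ σ) ^ n / (n.factorial : ℝ)) hfact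
      rwa [inv_div] at h
    have h2 : (c * t ^ σ) ^ n = c ^ n * t ^ (σ * (n:ℝ)) := by
      rw [mul_pow, ← Real.rpow_natCast (t ^ σ) n, ← Real.rpow_mul ht0.le]
    have h3 : t ^ (σ * (n:ℝ)) = ((1:ℝ) + ‖η‖ ^ 2) ^ ((σ * (n:ℝ)) / 2) := by
      have ht' : t = ((1:ℝ) + ‖η‖ ^ 2) ^ ((1:ℝ) / 2) := by
        rw [ht]; simp only [jap]; rw [Real.sqrt_eq_rpow]
      rw [ht', ← Real.rpow_mul hX0,
        show (1:ℝ) / 2 * (σ * (n:ℝ)) = σ * (n:ℝ) / 2 from by ring]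
    have h4 : (n.factorial : ℝ) / (c * t ^ σ) ^ n
        = ((n.factorial : ℝ) / c ^ n) * ((1:ℝ) + ‖η‖ ^ 2) ^ (-(σ * (n:ℝ)) / 2) := by
      have hcn : (c:ℝ) ^ n ≠ 0 := by positivity
      have hXp : (0:ℝ) < ((1:ℝ) + ‖η‖ ^ 2) ^ ((σ * (n:ℝ)) / 2) :=
        Real.rpow_pos_of_pos (by positivity) _
      rw [h2, h3, show -(σ * (n:ℝ)) / 2 = -(σ * (n:ℝ) / 2) from by ring,
        Real.rpow_neg hX0]
      field_simp
    calc Real.exp (-c * t ^ σ) = Real.exp (-(c * t ^ σ)) := by rw [neg_mul]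
      _ ≤ (n.factorial : ℝ) / (c * t ^ σ) ^ n := h1
      _ = ((n.factorial : ℝ) / c ^ n) * ((1:ℝ) + ‖η‖ ^ 2) ^ (-(σ * (n:ℝ)) / 2) := h4
  calc (⨆ ξ : E d, ∫⁻ η : E d, ENNReal.ofReal
        ((Real.exp (τ' * jap ξ ^ σ - τ * jap η ^ σ
            - τ * jap ξ ^ (-(δ / s)) * jap (ξ - η) ^ (1 / s))) ^ 2))
      ≤ ∫⁻ η : E d, ENNReal.ofReal (Real.exp (-c * jap η ^ σ)) :=
        iSup_le fun ξ => lintegral_mono (hpt ξ)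
    _ ≤ ∫⁻ η : E d, ENNReal.ofReal
        (((n.factorial : ℝ) / c ^ n) * ((1:ℝ) + ‖η‖ ^ 2) ^ (-(σ * n) / 2)) :=
        lintegral_mono fun η => ENNReal.ofReal_le_ofReal (hdom η)
    _ < ⊤ := hint2.lintegral_lt_top
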